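/- Let M = (m_{i,j}) be a k × n real matrix with all entries of row 1 equal to 0, with |m_{i,j} - m_{i,j'}| < N^{i-2}·n for all 2 ≤ i ≤ k-1 and all j, j' (where N = n+1), and with row k strictly decreasing with consecutive gaps |m_{k,j} - m_{k,j'}| ≥ N^{k-2} for all j ≠ j'. Then for every k-subset I = {r_1 < ... < r_k} of [n], every permutation α ∈ S_k minimizing Σ_{i=1}^k m_{i, r_{α(i)}} satisfies α(k) = k. -/

import Mathlib

/-! Exchange argument. If `α` does not fix the last index `k`, let `j = α⁻¹ k` and swap the
values of `α` at `j` and `k`; minimality of `α` gives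
`m_{k, r_{α k}} + m_{j, r_k} ≤ m_{k, r_k} + m_{j, r_{α k}}`. Since `r_{α k} < r_k`, row `k` drops by
at least `N^{k-2}` between these columns, whereas row `j < k` varies by less than
`N^{j-2} n < N^{k-2}` (and not at all for `j = 1`), a contradiction. -/

open Finset in
theorem Equiv.Perm.add_le_add_of_forall_sum_le {ι R : Type*} [Fintype ι] [AddCommMonoid R]
    [PartialOrder R] [IsOrderedCancelAddMonoid R] {c : ι → ι → R} {α : Equiv.Perm ι}
    (hmin : ∀ β : Equiv.Perm ι, ∑ i, c i (α i) ≤ ∑ i, c i (β i)) (i j : ι) :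
    c i (α i) + c j (α j) ≤ c i (α j) + c j (α i) := by
  classical
  rcases eq_or_ne i j with rfl | hij
  · rfl
  have split (f : ι → R) : ∑ x, f x = ∑ x ∈ univ \ {i, j}, f x + (f i + f j) := by
    rw [← sum_pair hij, sum_sdiff (subset_univ _)]
  have hrest : ∑ x ∈ univ \ {i, j}, c x (α x) = ∑ x ∈ univ \ {i, j}, c x (α (swap i j x)) :=
    sum_congr rfl fun x hx ↦ by
      simp only [mem_sdiff, mem_insert, mem_singleton, not_or] at hx
      rw [swap_apply_of_ne_of_ne hx.2.1 hx.2.2]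
  have h := hmin (α * swap i j)
  simp only [Perm.mul_apply] at h
  rwa [split, split fun x ↦ c x (α (swap i j x)), hrest, swap_apply_left, swap_apply_right,
    add_le_add_iff_left] at h

theorem natCast_add_one_pow_mul_lt_pow (n : ℕ) {a b : ℕ} (hab : a < b) :
    ((n : ℝ) + 1) ^ a * n < ((n : ℝ) + 1) ^ b :=
  calc ((n : ℝ) + 1) ^ a * n < ((n : ℝ) + 1) ^ a * (n + 1) := by gcongr; linarith
    _ = ((n : ℝ) + 1) ^ (a + 1) := (pow_succ _ _).symm
    _ ≤ ((n : ℝ) + 1) ^ b := pow_le_pow_right₀ (by linarith [n.cast_nonneg (α := ℝ)]) hab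

theorem row_sub_lt_pow_of_le_sub_two {k n : ℕ} (hk : 0 < k) {M : Fin k → Fin n → ℝ}
    (h1 : ∀ j : Fin n, M ⟨0, hk⟩ j = 0)
    (h2 : ∀ i : Fin k, 1 ≤ (i : ℕ) → (i : ℕ) ≤ k - 2 → ∀ j j' : Fin n,
      |M i j - M i j'| < ((n : ℝ) + 1) ^ ((i : ℕ) - 1) * (n : ℝ))
    {i : Fin k} (hi : (i : ℕ) ≤ k - 2) (j j' : Fin n) :
    M i j - M i j' < ((n : ℝ) + 1) ^ (k - 2) := by
  rcases Nat.eq_zero_or_pos i with hi0 | hi0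
  · obtain rfl : i = ⟨0, hk⟩ := Fin.ext hi0
    simp only [h1, sub_self]
    positivity
  · calc M i j - M i j' ≤ |M i j - M i j'| := le_abs_self _
      _ < ((n : ℝ) + 1) ^ ((i : ℕ) - 1) * n := h2 i hi0 hi j j'
      _ < ((n : ℝ) + 1) ^ (k - 2) := natCast_add_one_pow_mul_lt_pow n (by omega)

theorem stmt17 (k n : ℕ) (hk : 2 ≤ k) (M : Fin k → Fin n → ℝ)
    (h1 : ∀ j : Fin n, M ⟨0, by omega⟩ j = 0)
    (h2 : ∀ i : Fin k, 1 ≤ (i : ℕ) → (i : ℕ) ≤ k - 2 → ∀ j j' : Fin n,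
      |M i j - M i j'| < ((n : ℝ) + 1) ^ ((i : ℕ) - 1) * (n : ℝ))
    (h3 : ∀ j j' : Fin n, j < j' → M ⟨k - 1, by omega⟩ j' < M ⟨k - 1, by omega⟩ j)
    (h4 : ∀ j j' : Fin n, j ≠ j' →
      ((n : ℝ) + 1) ^ (k - 2) ≤ |M ⟨k - 1, by omega⟩ j - M ⟨k - 1, by omega⟩ j'|)
    (r : Fin k → Fin n) (hr : StrictMono r) (α : Equiv.Perm (Fin k))
    (hmin : ∀ β : Equiv.Perm (Fin k), ∑ i : Fin k, M i (r (α i)) ≤ ∑ i : Fin k, M i (r (β i))) :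
    α ⟨k - 1, by omega⟩ = ⟨k - 1, by omega⟩ := by
  set last : Fin k := ⟨k - 1, by omega⟩
  by_contra hne
  set j := α.symm last
  have hαj : α j = last := α.apply_symm_apply last
  have hj : (j : ℕ) ≤ k - 2 := by
    have : (j : ℕ) ≠ k - 1 := fun h ↦ hne (by rwa [show j = last from Fin.ext h] at hαj)
    omega
  have hlt : r (α last) < r last := hr <| Fin.lt_def.2 <| by
    have : (α last : ℕ) ≠ k - 1 := fun h ↦ hne (Fin.ext h)
    change (α last : ℕ) < k - 1
    omega
  have hgap : ((n : ℝ) + 1) ^ (k - 2) ≤ M last (r (α last)) - M last (r last) := by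
    rw [← abs_of_pos (sub_pos.2 (h3 _ _ hlt))]
    exact h4 _ _ hlt.ne
  have hexchange := Equiv.Perm.add_le_add_of_forall_sum_le
    (c := fun i σ ↦ M i (r σ)) hmin last j
  simp only [hαj] at hexchange
  have hrow := row_sub_lt_pow_of_le_sub_two (by omega) h1 h2 hj (r (α last)) (r last)
  linarith
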